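/- arXiv:2605.01375 — 2 statements merged into one kernel-verified Lean document; each statement's English description precedes it below -/
import Mathlib

section
/- Let ρ be a density matrix on ℂ^d (d ≥ 2) with purity P = Tr[ρ²], and suppose 1/d ≤ P < 1 with k ≥ 2 the integer satisfying 1/k ≤ P ≤ 1/(k−1). Then the von Neumann entropy of ρ satisfies L(P) ≤ S(ρ) ≤ U(P,d), where L(P) = −[(1 − λ_k) ln λ₁ + λ_k ln λ_k] with λ_k = 1/k − √((1 − 1/k)(P − 1/k)), λ₁ = (1 − λ_k)/(k − 1), and U(P,d) = −[(1 − λ) ln((1 − λ)/(d − 1)) + λ ln λ] with λ = 1/d + √((1 − 1/d)(P − 1/d)). -/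
/-!
The eigenvalues of `ρ` form a probability vector `p` with `∑ pᵢ² = P`, and `S(ρ)` is its Shannon
entropy, so it suffices to find the extreme values of the entropy on the compact set of such
vectors. Replacing three coordinates `(x, y, z)` by another point of the circle
`x + y + z = const`, `x² + y² + z² = const` stays in this set; parametrised by `z`, the entropy
along the circle has derivative `-[(y - z) log x + (z - x) log y + (x - y) log z] / (x - y)`, which
strict concavity of `log` makes positive whenever `z` is the smallest or the largest of the three.
Hence at a maximiser all coordinates but one are equal, and at a minimiser all positive
coordinates but one are equal to the largest. Solving the two moment equations for these shapes
gives `U(P, d)` and `L(P)`.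
-/

open scoped Kronecker ComplexOrder

/-- Von Neumann entropy (natural logarithm) of a matrix, via its eigenvalues
(`0` if the matrix is not Hermitian; `Real.log 0 = 0` handles zero eigenvalues). -/
noncomputable def vN {n : Type*} [Fintype n] [DecidableEq n] (ρ : Matrix n n ℂ) : ℝ :=
  if h : ρ.IsHermitian then -∑ i, h.eigenvalues i * Real.log (h.eigenvalues i) else 0

/-- Lower bound `L(P)` on the entropy at fixed purity `P`, where `k` is the integer
with `1/k ≤ P ≤ 1/(k−1)`: `L(P) = −[(1 − λ_k) ln λ₁ + λ_k ln λ_k]` with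
`λ_k = 1/k − √((1 − 1/k)(P − 1/k))` and `λ₁ = (1 − λ_k)/(k − 1)`. -/
noncomputable def Lent (P : ℝ) (k : ℕ) : ℝ :=
  let lamk : ℝ := 1 / (k : ℝ) - Real.sqrt ((1 - 1 / (k : ℝ)) * (P - 1 / (k : ℝ)))
  let lam1 : ℝ := (1 - lamk) / ((k : ℝ) - 1);
  -((1 - lamk) * Real.log lam1 + lamk * Real.log lamk)

/-- Upper bound `U(P,d)` on the entropy at fixed purity `P` in dimension `d`:
`U(P,d) = −[(1 − λ) ln((1 − λ)/(d − 1)) + λ ln λ]` with `λ = 1/d + √((1 − 1/d)(P − 1/d))`. -/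
noncomputable def Uent (P : ℝ) (d : ℕ) : ℝ :=
  let lam : ℝ := 1 / (d : ℝ) + Real.sqrt ((1 - 1 / (d : ℝ)) * (P - 1 / (d : ℝ)));
  -((1 - lam) * Real.log ((1 - lam) / ((d : ℝ) - 1)) + lam * Real.log lam)

open Real Finset

section Circle

open Set Filter Topology

noncomputable def circleDisc (S Q z : ℝ) : ℝ := 2 * Q - 2 * z ^ 2 - (S - z) ^ 2

/-- For `z` fixed, `(circleX S Q z, circleY S Q z)` is the pair `X ≥ Y` with `X + Y = S - z` and
`X ^ 2 + Y ^ 2 = Q - z ^ 2` (when `circleDisc S Q z ≥ 0`), so `(circleX, circleY, z)` runs over the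
circle `x + y + z = S`, `x ^ 2 + y ^ 2 + z ^ 2 = Q`. -/
noncomputable def circleX (S Q z : ℝ) : ℝ := (S - z + √(circleDisc S Q z)) / 2

noncomputable def circleY (S Q z : ℝ) : ℝ := (S - z - √(circleDisc S Q z)) / 2

noncomputable def circleEntropy (S Q z : ℝ) : ℝ :=
  negMulLog (circleX S Q z) + negMulLog (circleY S Q z) + negMulLog z

def IsExtremeCoord (S Q z : ℝ) : Prop :=
  0 < z ∧ 0 < circleY S Q z ∧ circleY S Q z < circleX S Q z ∧
    (z < circleY S Q z ∨ circleX S Q z < z)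

variable {S Q z : ℝ}

lemma circleX_add_circleY : circleX S Q z + circleY S Q z = S - z := by
  unfold circleX circleY; ring

lemma circleX_sub_circleY : circleX S Q z - circleY S Q z = √(circleDisc S Q z) := by
  unfold circleX circleY; ring

lemma circleX_sq_add_circleY_sq (hD : 0 ≤ circleDisc S Q z) :
    circleX S Q z ^ 2 + circleY S Q z ^ 2 + z ^ 2 = Q := by
  have := sq_sqrt hD
  unfold circleX circleY
  unfold circleDisc at this ⊢
  linear_combination this / 2

lemma circleDisc_eq (u v w z : ℝ) :
    circleDisc (u + v + w) (u ^ 2 + v ^ 2 + w ^ 2) z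
      = (u - v) ^ 2 + (z - w) * (2 * (u + v + w) - 3 * z - 3 * w) := by
  unfold circleDisc; ring

lemma circleX_circleY_eq {u v : ℝ} (w : ℝ) (hvu : v ≤ u) :
    circleX (u + v + w) (u ^ 2 + v ^ 2 + w ^ 2) w = u ∧
      circleY (u + v + w) (u ^ 2 + v ^ 2 + w ^ 2) w = v := by
  have hD : √(circleDisc (u + v + w) (u ^ 2 + v ^ 2 + w ^ 2) w) = u - v := by
    rw [circleDisc_eq, sub_self, zero_mul, add_zero, sqrt_sq (by linarith)]
  constructor <;> [unfold circleX; unfold circleY] <;> rw [hD] <;> ring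

@[fun_prop]
lemma continuous_circleX : Continuous (circleX S Q) := by
  unfold circleX circleDisc; fun_prop

@[fun_prop]
lemma continuous_circleY : Continuous (circleY S Q) := by
  unfold circleY circleDisc; fun_prop

lemma continuous_circleEntropy : Continuous (circleEntropy S Q) := by
  unfold circleEntropy; fun_prop

lemma hasDerivAt_sqrt_circleDisc (hD : 0 < circleDisc S Q z) :
    HasDerivAt (fun t ↦ √(circleDisc S Q t))
      ((circleX S Q z + circleY S Q z - 2 * z) / (circleX S Q z - circleY S Q z)) z := by
  have hDisc : HasDerivAt (circleDisc S Q) (2 * S - 6 * z) z := by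
    have := (((hasDerivAt_pow 2 z).const_mul 2).const_sub (2 * Q)).sub
      (((hasDerivAt_id z).const_sub S).pow 2)
    exact this.congr_deriv (by simp; ring)
  have hsqrt : √(circleDisc S Q z) ≠ 0 := (sqrt_pos.2 hD).ne'
  refine ((hasDerivAt_sqrt hD.ne').comp z hDisc).congr_deriv ?_
  rw [circleX_sub_circleY, circleX_add_circleY]
  field_simp
  ring

lemma hasDerivAt_circleX (hD : 0 < circleDisc S Q z) :
    HasDerivAt (circleX S Q)
      ((circleY S Q z - z) / (circleX S Q z - circleY S Q z)) z := by
  have hXY : circleX S Q z - circleY S Q z ≠ 0 := by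
    rw [circleX_sub_circleY]; exact (sqrt_pos.2 hD).ne'
  refine ((((hasDerivAt_id z).const_sub S).add
    (hasDerivAt_sqrt_circleDisc hD)).div_const 2).congr_deriv ?_
  field_simp
  ring

lemma hasDerivAt_circleY (hD : 0 < circleDisc S Q z) :
    HasDerivAt (circleY S Q)
      ((z - circleX S Q z) / (circleX S Q z - circleY S Q z)) z := by
  have hXY : circleX S Q z - circleY S Q z ≠ 0 := by
    rw [circleX_sub_circleY]; exact (sqrt_pos.2 hD).ne'
  refine ((((hasDerivAt_id z).const_sub S).sub
    (hasDerivAt_sqrt_circleDisc hD)).div_const 2).congr_deriv ?_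
  field_simp
  ring

lemma hasDerivAt_circleEntropy (hz : 0 < z) (hY : 0 < circleY S Q z)
    (hYX : circleY S Q z < circleX S Q z) :
    HasDerivAt (circleEntropy S Q)
      (-((circleY S Q z - z) * log (circleX S Q z) + (z - circleX S Q z) * log (circleY S Q z)
        + (circleX S Q z - circleY S Q z) * log z) / (circleX S Q z - circleY S Q z)) z := by
  have hD : 0 < circleDisc S Q z := by
    rw [← sqrt_pos, ← circleX_sub_circleY]; linarith
  have hXY : circleX S Q z - circleY S Q z ≠ 0 := by linarith
  refine (((hasDerivAt_negMulLog (by linarith)).comp z (hasDerivAt_circleX hD)).add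
    ((hasDerivAt_negMulLog hY.ne').comp z (hasDerivAt_circleY hD)) |>.add
    (hasDerivAt_negMulLog hz.ne')).congr_deriv ?_
  field_simp
  ring

lemma log_three_point_neg {a b c : ℝ} (hc : 0 < c) (hcb : c < b) (hba : b < a) :
    (b - c) * log a + (c - a) * log b + (a - b) * log c < 0 := by
  have h := strictConcaveOn_log_Ioi.slope_anti_adjacent (mem_Ioi.2 hc)
    (mem_Ioi.2 (hc.trans (hcb.trans hba))) hcb hba
  rw [div_lt_div_iff₀ (by linarith) (by linarith)] at h
  linarith

lemma circleEntropy_lt {a b : ℝ} (hab : a < b) (h : ∀ z ∈ Ioo a b, IsExtremeCoord S Q z) :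
    circleEntropy S Q a < circleEntropy S Q b := by
  refine strictMonoOn_of_deriv_pos (convex_Icc a b) continuous_circleEntropy.continuousOn
    (fun z hz ↦ ?_) (left_mem_Icc.2 hab.le) (right_mem_Icc.2 hab.le) hab
  rw [interior_Icc] at hz
  obtain ⟨hz0, hY, hYX, hzY | hXz⟩ := h z hz <;>
    rw [(hasDerivAt_circleEntropy hz0 hY hYX).deriv] <;>
    refine div_pos (neg_pos.2 ?_) (by linarith)
  · linarith [log_three_point_neg hz0 hzY hYX]
  · linarith [log_three_point_neg hY hYX hXz]

lemma IsExtremeCoord.moments (h : IsExtremeCoord S Q z) :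
    0 ≤ circleX S Q z ∧ 0 ≤ circleY S Q z ∧ 0 ≤ z ∧ circleX S Q z + circleY S Q z + z = S ∧
      circleX S Q z ^ 2 + circleY S Q z ^ 2 + z ^ 2 = Q := by
  obtain ⟨hz, hY, hYX, -⟩ := h
  have hD : 0 ≤ circleDisc S Q z := by
    by_contra! hD
    have := circleX_sub_circleY (S := S) (Q := Q) (z := z)
    rw [sqrt_eq_zero_of_nonpos hD.le] at this
    linarith
  exact ⟨by linarith, hY.le, hz.le, by linarith [circleX_add_circleY (S := S) (Q := Q) (z := z)],
    circleX_sq_add_circleY_sq hD⟩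

lemma exists_circleEntropy_gt {a : ℝ} (h : ∀ᶠ z in 𝓝[>] a, IsExtremeCoord S Q z) :
    ∃ c, IsExtremeCoord S Q c ∧ circleEntropy S Q a < circleEntropy S Q c := by
  obtain ⟨b, hab : a < b, hsub⟩ := mem_nhdsGT_iff_exists_Ioo_subset.1 h
  refine ⟨(a + b) / 2, hsub ⟨by linarith, by linarith⟩, circleEntropy_lt (by linarith) ?_⟩
  exact fun z hz ↦ hsub ⟨hz.1, by linarith [hz.2]⟩

lemma exists_circleEntropy_lt {a : ℝ} (h : ∀ᶠ z in 𝓝[<] a, IsExtremeCoord S Q z) :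
    ∃ c, IsExtremeCoord S Q c ∧ circleEntropy S Q c < circleEntropy S Q a := by
  obtain ⟨b, hba : b < a, hsub⟩ := mem_nhdsLT_iff_exists_Ioo_subset.1 h
  refine ⟨(a + b) / 2, hsub ⟨by linarith, by linarith⟩, circleEntropy_lt (by linarith) ?_⟩
  exact fun z hz ↦ hsub ⟨by linarith [hz.1], hz.2⟩

lemma exists_negMulLog_gt_of_lt_of_le {u v w : ℝ} (hw : 0 ≤ w) (hwv : w < v) (hvu : v ≤ u) :
    ∃ x y z : ℝ, 0 ≤ x ∧ 0 ≤ y ∧ 0 ≤ z ∧ x + y + z = u + v + w ∧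
      x ^ 2 + y ^ 2 + z ^ 2 = u ^ 2 + v ^ 2 + w ^ 2 ∧
      negMulLog u + negMulLog v + negMulLog w < negMulLog x + negMulLog y + negMulLog z := by
  set S := u + v + w
  set Q := u ^ 2 + v ^ 2 + w ^ 2
  obtain ⟨hXw, hYw⟩ := circleX_circleY_eq w hvu
  have hgt : ∀ᶠ z in 𝓝[>] w, w < z := self_mem_nhdsWithin
  have hzY : ∀ᶠ z in 𝓝[>] w, z < circleY S Q z :=
    (continuousAt_id.eventually_lt continuous_circleY.continuousAt (by rwa [hYw])).filter_mono
      nhdsWithin_le_nhds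
  have hlin : ∀ᶠ z in 𝓝[>] w, 3 * z + 3 * w < 2 * S :=
    (ContinuousAt.eventually_lt (by fun_prop) continuousAt_const (by linarith)).filter_mono
      nhdsWithin_le_nhds
  obtain ⟨c, hc, hlt⟩ := exists_circleEntropy_gt (S := S) (Q := Q) (a := w) <| by
    filter_upwards [hgt, hzY, hlin] with z hwz hzY hlin
    refine ⟨by linarith, by linarith, ?_, Or.inl hzY⟩
    rw [← sub_pos, circleX_sub_circleY, sqrt_pos, circleDisc_eq]
    nlinarith [sq_nonneg (u - v), mul_pos (sub_pos.2 hwz) (sub_pos.2 hlin)]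
  obtain ⟨hx, hy, hz, hsum, hsq⟩ := hc.moments
  refine ⟨_, _, c, hx, hy, hz, hsum, hsq, ?_⟩
  rwa [circleEntropy, hXw, hYw] at hlt

lemma exists_negMulLog_lt_of_le_of_lt {u v w : ℝ} (hw : 0 < w) (hwv : w ≤ v) (hvu : v < u) :
    ∃ x y z : ℝ, 0 ≤ x ∧ 0 ≤ y ∧ 0 ≤ z ∧ x + y + z = u + v + w ∧
      x ^ 2 + y ^ 2 + z ^ 2 = u ^ 2 + v ^ 2 + w ^ 2 ∧
      negMulLog x + negMulLog y + negMulLog z < negMulLog u + negMulLog v + negMulLog w := by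
  set S := v + w + u
  set Q := v ^ 2 + w ^ 2 + u ^ 2
  obtain ⟨hXu, hYu⟩ := circleX_circleY_eq u hwv
  have hbelow : ∀ᶠ z in 𝓝[<] u, z < u := self_mem_nhdsWithin
  have hXz : ∀ᶠ z in 𝓝[<] u, circleX S Q z < z :=
    (continuous_circleX.continuousAt.eventually_lt continuousAt_id (by rwa [hXu])).filter_mono
      nhdsWithin_le_nhds
  have hY : ∀ᶠ z in 𝓝[<] u, 0 < circleY S Q z :=
    (continuousAt_const.eventually_lt continuous_circleY.continuousAt (by rwa [hYu])).filter_mono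
      nhdsWithin_le_nhds
  have hlin : ∀ᶠ z in 𝓝[<] u, 2 * S < 3 * z + 3 * u :=
    (ContinuousAt.eventually_lt continuousAt_const (by fun_prop) (by linarith)).filter_mono
      nhdsWithin_le_nhds
  obtain ⟨c, hc, hlt⟩ := exists_circleEntropy_lt (S := S) (Q := Q) (a := u) <| by
    filter_upwards [hbelow, hXz, hY, hlin] with z hzu hXz hY hlin
    have hYX : circleY S Q z < circleX S Q z := by
      rw [← sub_pos, circleX_sub_circleY, sqrt_pos, circleDisc_eq]
      nlinarith [sq_nonneg (v - w), mul_pos (sub_pos.2 hzu) (sub_pos.2 hlin)]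
    exact ⟨by linarith, hY, hYX, Or.inr hXz⟩
  obtain ⟨hx, hy, hz, hsum, hsq⟩ := hc.moments
  refine ⟨_, _, c, hx, hy, hz, by linarith, by linarith, ?_⟩
  unfold circleEntropy at hlt
  rw [hXu, hYu] at hlt
  linarith

end Circle

lemma exists_forall_ne_eq_of_lt_imp_lt {α ι : Type*} [LinearOrder α] [Finite ι] [Nonempty ι]
    (q : ι → α) (h : ∀ i j l, i ≠ j → i ≠ l → j ≠ l → q l < q j → q i < q j) :
    ∃ i₀ B, B ≤ q i₀ ∧ ∀ m ≠ i₀, q m = B := by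
  obtain ⟨l, hl⟩ := Finite.exists_min q
  by_cases hall : ∀ m, q m = q l
  · exact ⟨l, q l, le_rfl, fun m _ ↦ hall m⟩
  push Not at hall
  obtain ⟨i₀, hi₀⟩ := hall
  have hli₀ : q l < q i₀ := lt_of_le_of_ne (hl i₀) (Ne.symm hi₀)
  refine ⟨i₀, q l, hli₀.le, fun m hm ↦ ?_⟩
  by_contra hml
  have hlm : q l < q m := lt_of_le_of_ne (hl m) (Ne.symm hml)
  have hi₀l : i₀ ≠ l := fun h ↦ hi₀ (congrArg q h)
  have hml' : m ≠ l := fun h ↦ hml (congrArg q h)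
  exact lt_asymm (h m i₀ l hm hml' hi₀l hli₀) (h i₀ m l hm.symm hi₀l hml' hlm)

lemma exists_forall_ne_le_or_eq_of_lt_imp_le {α ι : Type*} [LinearOrder α] [Finite ι]
    (q : ι → α) (c : α) (hpos : ∃ i, c < q i)
    (h : ∀ i j l, i ≠ j → i ≠ l → j ≠ l → c < q l → q l ≤ q j → q i ≤ q j) :
    ∃ i₀ A, c < q i₀ ∧ q i₀ ≤ A ∧ ∀ m ≠ i₀, q m ≤ c ∨ q m = A := by
  obtain ⟨i, hi⟩ := hpos
  have : Nonempty ι := ⟨i⟩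
  obtain ⟨t, ht⟩ := Finite.exists_max q
  by_cases hall : ∀ m, c < q m → q m = q t
  · exact ⟨t, q t, hi.trans_le (ht i), le_rfl, fun m _ ↦ (le_or_gt (q m) c).imp_right (hall m)⟩
  push Not at hall
  obtain ⟨i₀, hci₀, hi₀⟩ := hall
  have hi₀t : q i₀ < q t := lt_of_le_of_ne (ht i₀) hi₀
  refine ⟨i₀, q t, hci₀, hi₀t.le, fun m hm ↦ ?_⟩
  by_contra! hmc
  have hmt : q m < q t := lt_of_le_of_ne (ht m) hmc.2
  have hti₀ : t ≠ i₀ := fun h ↦ hi₀ (congrArg q h.symm)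
  have htm : t ≠ m := fun h ↦ hmc.2 (congrArg q h.symm)
  rcases le_or_gt (q i₀) (q m) with hle | hlt
  · exact (h t m i₀ htm hti₀ hm hci₀ hle).not_gt hmt
  · exact (h t i₀ m hti₀ htm hm.symm hmc.1 hlt.le).not_gt hi₀t

lemma negMulLog_add_mul_negMulLog_eq_Uent {d : ℕ} (hd : 2 ≤ d) {a b : ℝ} (hba : b ≤ a)
    (hsum : a + (d - 1) * b = 1) :
    negMulLog a + (d - 1) * negMulLog b = Uent (a ^ 2 + (d - 1) * b ^ 2) d := by
  have hd1 : (0 : ℝ) < d - 1 := by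
    have : (2 : ℝ) ≤ d := by exact_mod_cast hd
    linarith
  have hb : b = (1 - a) / (d - 1) := by field_simp; linarith
  have hsqrt : √((1 - 1 / (d : ℝ)) * (a ^ 2 + (d - 1) * b ^ 2 - 1 / d)) = a - 1 / d := by
    rw [← sqrt_sq (show 0 ≤ a - 1 / (d : ℝ) by
      rw [sub_nonneg, div_le_iff₀ (by linarith)]; nlinarith)]
    congr 1
    rw [hb]
    field_simp
    ring
  rw [Uent]
  simp only [hsqrt, add_sub_cancel, ← hb, negMulLog]
  rw [show 1 - a = (d - 1) * b by linarith]
  ring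

lemma mul_negMulLog_add_negMulLog_eq_Lent_add_one {j : ℕ} (hj : 1 ≤ j) {a b : ℝ} (hba : b ≤ a)
    (hsum : j * a + b = 1) :
    j * negMulLog a + negMulLog b = Lent (j * a ^ 2 + b ^ 2) (j + 1) := by
  have hj' : (1 : ℝ) ≤ j := by exact_mod_cast hj
  have ha : a = (1 - b) / j := by field_simp; linarith
  have hsqrt : √((1 - 1 / ((j : ℝ) + 1)) * (j * a ^ 2 + b ^ 2 - 1 / (j + 1)))
      = 1 / (j + 1) - b := by
    rw [← sqrt_sq (show 0 ≤ 1 / ((j : ℝ) + 1) - b by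
      rw [sub_nonneg, le_div_iff₀ (by linarith)]; nlinarith)]
    congr 1
    rw [ha]
    field_simp
    ring
  rw [Lent]
  push_cast
  simp only [hsqrt, sub_sub_cancel, add_sub_cancel_right, ← ha, negMulLog]
  rw [show 1 - b = j * a by linarith]
  ring

lemma eq_add_one_or_eq_add_two_of_mul_lt_one {j k : ℕ} (hk : 2 ≤ k) {P : ℝ} (hjP : j * P < 1)
    (hjP' : 1 ≤ (j + 1) * P) (hkP : 1 / (k : ℝ) ≤ P) (hkP' : P ≤ 1 / ((k : ℝ) - 1)) :
    k = j + 1 ∨ k = j + 2 := by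
  have hk1 : (1 : ℝ) < k := by exact_mod_cast hk
  have hjk : (j : ℝ) < k := by
    have := mul_le_mul_of_nonneg_left hkP (Nat.cast_nonneg j)
    rw [← div_eq_mul_one_div, div_le_iff₀ (by linarith)] at this
    nlinarith
  have hkj : (k : ℝ) ≤ j + 2 := by
    have := mul_le_mul_of_nonneg_left hkP' (by positivity : (0 : ℝ) ≤ j + 1)
    rw [← div_eq_mul_one_div, le_div_iff₀ (by linarith)] at this
    nlinarith
  have : j < k := by exact_mod_cast hjk
  have : k ≤ j + 2 := by exact_mod_cast hkj
  omega

lemma mul_negMulLog_add_negMulLog_eq_Lent {k j : ℕ} (hk : 2 ≤ k) {a b P : ℝ} (hb : 0 < b)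
    (hba : b ≤ a) (hsum : j * a + b = 1) (hsq : j * a ^ 2 + b ^ 2 = P)
    (hkP : 1 / (k : ℝ) ≤ P) (hkP' : P ≤ 1 / ((k : ℝ) - 1)) :
    j * negMulLog a + negMulLog b = Lent P k := by
  have hspread : j * (a - b) ^ 2 = (j + 1) * P - 1 := by
    linear_combination (j + 1 : ℝ) * hsq - (1 + j * a + b) * hsum
  have hjP : j * P < 1 := by
    have : j * P - 1 = (j - 1) * b ^ 2 - 2 * j * a * b := by
      linear_combination (-(j : ℝ)) * hsq + (j * a + b + 1) * hsum
    nlinarith [mul_le_mul_of_nonneg_left hba (mul_nonneg (Nat.cast_nonneg j) hb.le)]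
  have hjP' : 1 ≤ (j + 1) * P := by
    nlinarith [mul_nonneg (Nat.cast_nonneg j) (sq_nonneg (a - b))]
  obtain rfl | rfl := eq_add_one_or_eq_add_two_of_mul_lt_one hk hjP hjP' hkP hkP'
  · exact hsq ▸ mul_negMulLog_add_negMulLog_eq_Lent_add_one (by omega) hba hsum
  -- Here `P = 1 / (j + 1)`, so `j * (a - b) ^ 2 = 0`: the vector is `j + 1` copies of `b` and a `0`.
  · have hflat : j * (a - b) ^ 2 = 0 := by
      refine le_antisymm ?_ (by positivity)
      rw [hspread, sub_nonpos, ← le_div_iff₀' (by positivity)]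
      rwa [show ((j + 2 : ℕ) : ℝ) - 1 = j + 1 by push_cast; ring] at hkP'
    have hab : j * a = j * b ∧ j * a ^ 2 = j * b ^ 2 ∧ j * negMulLog a = j * negMulLog b := by
      rcases mul_eq_zero.1 hflat with h | h
      · simp [h]
      · simp [sub_eq_zero.1 (pow_eq_zero_iff two_ne_zero |>.1 h)]
    have := mul_negMulLog_add_negMulLog_eq_Lent_add_one (j := j + 1) (by omega) hb.le
      (by push_cast; linarith)
    push_cast at this
    rw [← hsq]
    calc j * negMulLog a + negMulLog b = (j + 1) * negMulLog b + negMulLog 0 := by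
          rw [hab.2.2, negMulLog_zero]; ring
      _ = Lent ((j + 1) * b ^ 2 + 0 ^ 2) (j + 2) := this
      _ = Lent (j * a ^ 2 + b ^ 2) (j + 2) := by congr 1; linarith [hab.2.1]

section PuritySlice

variable {ι : Type*} [Fintype ι] {P : ℝ} {q : ι → ℝ}

def puritySlice (ι : Type*) [Fintype ι] (P : ℝ) : Set (ι → ℝ) :=
  stdSimplex ℝ ι ∩ {q | ∑ i, q i ^ 2 = P}

noncomputable def shannonEntropy (q : ι → ℝ) : ℝ := ∑ i, negMulLog (q i)

lemma isCompact_puritySlice : IsCompact (puritySlice ι P) :=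
  (isCompact_stdSimplex ℝ ι).inter_right (isClosed_eq (by fun_prop) continuous_const)

lemma continuous_shannonEntropy : Continuous (shannonEntropy (ι := ι)) := by
  unfold shannonEntropy; fun_prop

lemma exists_pos_of_mem_puritySlice (hq : q ∈ puritySlice ι P) :
    ∃ i, 0 < q i := by
  obtain ⟨i, -, hi⟩ := exists_lt_of_sum_lt (s := univ) (f := 0) (g := q) (by simp [hq.1.2])
  exact ⟨i, hi⟩

lemma exists_mem_puritySlice_shannonEntropy_sub_eq [DecidableEq ι] (hq : q ∈ puritySlice ι P)
    {i j l : ι} (hij : i ≠ j) (hil : i ≠ l) (hjl : j ≠ l)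
    {x y z : ℝ} (hx : 0 ≤ x) (hy : 0 ≤ y) (hz : 0 ≤ z) (hsum : x + y + z = q i + q j + q l)
    (hsq : x ^ 2 + y ^ 2 + z ^ 2 = q i ^ 2 + q j ^ 2 + q l ^ 2) :
    ∃ r ∈ puritySlice ι P, shannonEntropy r - shannonEntropy q
      = negMulLog x + negMulLog y + negMulLog z
        - (negMulLog (q i) + negMulLog (q j) + negMulLog (q l)) := by
  set r : ι → ℝ := fun m ↦ if m = i then x else if m = j then y else if m = l then z else q m
  have hsum_sub (φ : ℝ → ℝ) : ∑ m, φ (r m) - ∑ m, φ (q m)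
      = φ x + φ y + φ z - (φ (q i) + φ (q j) + φ (q l)) := by
    rw [← sum_sub_distrib, ← sum_subset (subset_univ {i, j, l}) fun m _ hm ↦ by
      simp only [mem_insert, mem_singleton, not_or] at hm
      simp [r, hm.1, hm.2.1, hm.2.2]]
    rw [sum_insert (by simp [hij, hil]), sum_insert (by simp [hjl]), sum_singleton]
    simp only [r, if_true, if_neg hij.symm, if_neg hil.symm, if_neg hjl.symm]
    ring
  obtain ⟨⟨hq0, hq1⟩, hq2 : ∑ m, q m ^ 2 = P⟩ := hq
  refine ⟨r, ⟨⟨fun m ↦ ?_, ?_⟩, show ∑ m, r m ^ 2 = P by linarith [hsum_sub (· ^ 2)]⟩,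
    hsum_sub negMulLog⟩
  · simp only [r]; split_ifs <;> first | assumption | exact hq0 m
  · linarith [hsum_sub fun t ↦ t]

lemma sum_comp_eq_add_card_mul [DecidableEq ι] {φ : ℝ → ℝ} (hφ : φ 0 = 0) {i₀ : ι}
    {s : Finset ι} (hi₀ : i₀ ∉ s) {A : ℝ} (hs : ∀ m ∈ s, q m = A)
    (hzero : ∀ m ∉ s, m ≠ i₀ → q m = 0) :
    ∑ m, φ (q m) = φ (q i₀) + #s * φ A := by
  rw [← sum_subset (subset_univ (insert i₀ s)) fun m _ hm ↦ by
    rw [mem_insert, not_or] at hm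
    rw [hzero m hm.2 hm.1, hφ]]
  rw [sum_insert hi₀, sum_congr rfl fun m hm ↦ by rw [hs m hm], sum_const, nsmul_eq_mul]

variable [DecidableEq ι]

lemma exists_forall_ne_eq_of_isMaxOn (hq : q ∈ puritySlice ι P)
    (hmax : IsMaxOn shannonEntropy (puritySlice ι P) q) :
    ∃ i₀ B, B ≤ q i₀ ∧ ∀ m ≠ i₀, q m = B := by
  obtain ⟨i, -⟩ := exists_pos_of_mem_puritySlice hq
  have : Nonempty ι := ⟨i⟩
  refine exists_forall_ne_eq_of_lt_imp_lt q fun i j l hij hil hjl hlj ↦ ?_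
  by_contra! hji
  obtain ⟨x, y, z, hx, hy, hz, hsum, hsq, hlt⟩ :=
    exists_negMulLog_gt_of_lt_of_le (hq.1.1 l) hlj hji
  obtain ⟨r, hr, hdiff⟩ :=
    exists_mem_puritySlice_shannonEntropy_sub_eq hq hij hil hjl hx hy hz hsum hsq
  have : shannonEntropy r ≤ shannonEntropy q := hmax hr
  linarith

lemma exists_forall_ne_eq_zero_or_eq_of_isMinOn (hq : q ∈ puritySlice ι P)
    (hmin : IsMinOn shannonEntropy (puritySlice ι P) q) :
    ∃ i₀ A, 0 < q i₀ ∧ q i₀ ≤ A ∧ ∀ m ≠ i₀, q m = 0 ∨ q m = A := by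
  obtain ⟨i₀, A, h0, hA, hq_eq⟩ := exists_forall_ne_le_or_eq_of_lt_imp_le q 0
    (exists_pos_of_mem_puritySlice hq) fun i j l hij hil hjl hl hlj ↦ by
      by_contra! hji
      obtain ⟨x, y, z, hx, hy, hz, hsum, hsq, hlt⟩ :=
        exists_negMulLog_lt_of_le_of_lt hl hlj hji
      obtain ⟨r, hr, hdiff⟩ :=
        exists_mem_puritySlice_shannonEntropy_sub_eq hq hij hil hjl hx hy hz hsum hsq
      have : shannonEntropy q ≤ shannonEntropy r := hmin hr
      linarith
  exact ⟨i₀, A, h0, hA, fun m hm ↦ (hq_eq m hm).imp_left (le_antisymm · (hq.1.1 m))⟩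

lemma shannonEntropy_eq_Uent_of_isMaxOn (hd : 2 ≤ Fintype.card ι) (hq : q ∈ puritySlice ι P)
    (hmax : IsMaxOn shannonEntropy (puritySlice ι P) q) :
    shannonEntropy q = Uent P (Fintype.card ι) := by
  obtain ⟨i₀, B, hB, hq_eq⟩ := exists_forall_ne_eq_of_isMaxOn hq hmax
  have hsum {φ : ℝ → ℝ} (hφ : φ 0 = 0) :
      ∑ m, φ (q m) = φ (q i₀) + (Fintype.card ι - 1) * φ B := by
    rw [sum_comp_eq_add_card_mul hφ (notMem_erase i₀ univ)
      (fun m hm ↦ hq_eq m (ne_of_mem_erase hm))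
      (fun m hm hm' ↦ absurd (mem_erase.2 ⟨hm', mem_univ m⟩) hm),
      card_erase_of_mem (mem_univ _), card_univ, Nat.cast_pred (by omega)]
  have hP : ∑ m, q m ^ 2 = P := hq.2
  rw [shannonEntropy, hsum negMulLog_zero, ← hP, hsum (φ := (· ^ 2)) (by simp)]
  have h1 := hsum (φ := fun t ↦ t) rfl
  exact negMulLog_add_mul_negMulLog_eq_Uent hd hB (h1 ▸ hq.1.2)

lemma shannonEntropy_eq_Lent_of_isMinOn {k : ℕ} (hk : 2 ≤ k) (hkP : 1 / (k : ℝ) ≤ P)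
    (hkP' : P ≤ 1 / ((k : ℝ) - 1)) (hq : q ∈ puritySlice ι P)
    (hmin : IsMinOn shannonEntropy (puritySlice ι P) q) :
    shannonEntropy q = Lent P k := by
  obtain ⟨i₀, A, h0, hA, hq_eq⟩ := exists_forall_ne_eq_zero_or_eq_of_isMinOn hq hmin
  set s := univ.filter fun m ↦ m ≠ i₀ ∧ q m ≠ 0
  have hsum {φ : ℝ → ℝ} (hφ : φ 0 = 0) : ∑ m, φ (q m) = φ (q i₀) + #s * φ A := by
    refine sum_comp_eq_add_card_mul hφ (by simp [s]) (fun m hm ↦ ?_) (fun m hm hm' ↦ ?_)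
    · rw [mem_filter] at hm
      exact (hq_eq m hm.2.1).resolve_left hm.2.2
    · simpa [s, hm'] using hm
  have h1 := hsum (φ := fun t ↦ t) rfl
  have h2 := hsum (φ := (· ^ 2)) (by simp)
  have hP : ∑ m, q m ^ 2 = P := hq.2
  rw [shannonEntropy, hsum negMulLog_zero, add_comm]
  exact mul_negMulLog_add_negMulLog_eq_Lent hk h0 hA (by linarith [hq.1.2]) (by linarith) hkP hkP'

end PuritySlice

section Density

variable {n : Type*} [Fintype n] [DecidableEq n]

lemma trace_mul_self_eq_sum_sq_eigenvalues {𝕜 : Type*} [RCLike 𝕜] {A : Matrix n n 𝕜}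
    (hA : A.IsHermitian) : (A * A).trace = ∑ i, (hA.eigenvalues i : 𝕜) ^ 2 := by
  conv_lhs => rw [hA.spectral_theorem, ← map_mul, Unitary.conjStarAlgAut_apply,
    Matrix.trace_mul_cycle, Unitary.coe_star_mul_self, one_mul, Matrix.diagonal_mul_diagonal,
    Matrix.trace_diagonal]
  simp [sq]

lemma eigenvalues_mem_puritySlice {ρ : Matrix n n ℂ} (hρ : ρ.PosSemidef) (htr : ρ.trace = 1)
    {P : ℝ} (hP : (ρ * ρ).trace = (P : ℂ)) : hρ.1.eigenvalues ∈ puritySlice n P := by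
  refine ⟨⟨hρ.eigenvalues_nonneg, ?_⟩, ?_⟩
  · rw [hρ.1.trace_eq_sum_eigenvalues] at htr
    simpa using congrArg Complex.re htr
  · rw [trace_mul_self_eq_sum_sq_eigenvalues hρ.1] at hP
    simpa [← Complex.ofReal_pow] using congrArg Complex.re hP

lemma vN_eq_shannonEntropy {ρ : Matrix n n ℂ} (hρ : ρ.IsHermitian) :
    vN ρ = shannonEntropy hρ.eigenvalues := by
  simp [vN, hρ, shannonEntropy, negMulLog]

end Density

theorem vonNeumann_entropy_purity_bounds_general
    (d : ℕ) (hd : 2 ≤ d) (ρ : Matrix (Fin d) (Fin d) ℂ)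
    (hρ : ρ.PosSemidef) (htr : ρ.trace = 1)
    (P : ℝ) (hP : (ρ * ρ).trace = (P : ℂ))
    (k : ℕ) (hk : 2 ≤ k) (hkP : 1 / (k : ℝ) ≤ P) (hkP' : P ≤ 1 / ((k : ℝ) - 1)) :
    Lent P k ≤ vN ρ ∧ vN ρ ≤ Uent P d := by
  have hp := eigenvalues_mem_puritySlice hρ htr hP
  obtain ⟨qmin, hqmin, hmin⟩ := isCompact_puritySlice.exists_isMinOn ⟨_, hp⟩
    continuous_shannonEntropy.continuousOn
  obtain ⟨qmax, hqmax, hmax⟩ := isCompact_puritySlice.exists_isMaxOn ⟨_, hp⟩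
    continuous_shannonEntropy.continuousOn
  have hLent := shannonEntropy_eq_Lent_of_isMinOn hk hkP hkP' hqmin hmin
  have hUent := shannonEntropy_eq_Uent_of_isMaxOn (by simpa using hd) hqmax hmax
  rw [Fintype.card_fin] at hUent
  rw [vN_eq_shannonEntropy hρ.1, ← hLent, ← hUent]
  exact ⟨hmin hp, hmax hp⟩

/-- For a density matrix `ρ` on `ℂ^d` (`d ≥ 2`) with purity
`P = Tr[ρ²]`, `1/d ≤ P < 1`, and `k ≥ 2` the integer with `1/k ≤ P ≤ 1/(k−1)`,
the von Neumann entropy satisfies `L(P) ≤ S(ρ) ≤ U(P,d)`. -/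
theorem vonNeumann_entropy_purity_bounds
    (d : ℕ) (hd : 2 ≤ d) (ρ : Matrix (Fin d) (Fin d) ℂ)
    (hρ : ρ.PosSemidef) (htr : ρ.trace = 1)
    (P : ℝ) (hP : (ρ * ρ).trace = (P : ℂ))
    (hPlow : 1 / (d : ℝ) ≤ P) (hPhigh : P < 1)
    (k : ℕ) (hk : 2 ≤ k) (hkP : 1 / (k : ℝ) ≤ P) (hkP' : P ≤ 1 / ((k : ℝ) - 1)) :
    Lent P k ≤ vN ρ ∧ vN ρ ≤ Uent P d :=
  vonNeumann_entropy_purity_bounds_general d hd ρ hρ htr P hP k hk hkP hkP'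
end

section
/- (Koashi–Winter relation) Let |Ψ⟩ be a unit vector in ℂ^{d_A} ⊗ ℂ^{d_B} ⊗ ℂ^{d_C} with ρ_ABC = |Ψ⟩⟨Ψ| and reduced states ρ_AB, ρ_AC, ρ_A. Then E_F(ρ_AB) ≤ S(ρ_A) − J(A:C), where J(A:C) is the classical correlation of ρ_AC, i.e. the supremum over projective measurements {Π_i} on C of S(ρ_A) − Σ_i p_i S(ρ_{A,i}), with p_i = Tr[(I_A ⊗ Π_i) ρ_AC] and ρ_{A,i} = Tr_C[(I_A ⊗ Π_i) ρ_AC (I_A ⊗ Π_i)]/p_i. -/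
open scoped Kronecker ComplexOrder

/-- Partial trace over the second tensor factor. -/
noncomputable def ptraceB {A B : Type*} [Fintype B] (ρ : Matrix (A × B) (A × B) ℂ) :
    Matrix A A ℂ := Matrix.of fun a a' => ∑ b, ρ (a, b) (a', b)

/-- Partial trace over the first tensor factor. -/
noncomputable def ptraceA {A B : Type*} [Fintype A] (ρ : Matrix (A × B) (A × B) ℂ) :
    Matrix B B ℂ := Matrix.of fun b b' => ∑ a, ρ (a, b) (a, b')

/-- Partial trace over the third factor of a tripartite system `A × B × C`. -/
noncomputable def ptraceC3 {A B C : Type*} [Fintype C] (ρ : Matrix (A × B × C) (A × B × C) ℂ) :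
    Matrix (A × B) (A × B) ℂ := Matrix.of fun x y => ∑ c, ρ (x.1, x.2, c) (y.1, y.2, c)

/-- Partial trace over the second factor of a tripartite system `A × B × C`. -/
noncomputable def ptraceB3 {A B C : Type*} [Fintype B] (ρ : Matrix (A × B × C) (A × B × C) ℂ) :
    Matrix (A × C) (A × C) ℂ := Matrix.of fun x y => ∑ b, ρ (x.1, b, x.2) (y.1, b, y.2)

/-- Entanglement of formation: infimum of the average local entropy over finite
pure-state ensembles realizing `ρAB` (entropies in natural logarithm). -/
noncomputable def EoF {A B : Type*} [Fintype A] [DecidableEq A] [Fintype B] [DecidableEq B]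
    (ρAB : Matrix (A × B) (A × B) ℂ) : ℝ :=
  sInf { x : ℝ | ∃ (n : ℕ) (p : Fin n → ℝ) (ψ : Fin n → (A × B → ℂ)),
    (∀ i, 0 ≤ p i) ∧ (∑ i, p i = 1) ∧ (∀ i, ∑ v, ‖ψ i v‖ ^ 2 = 1) ∧
    ρAB = ∑ i, (p i : ℂ) • Matrix.vecMulVec (ψ i) (star (ψ i)) ∧
    x = ∑ i, p i * vN (ptraceB (Matrix.vecMulVec (ψ i) (star (ψ i)))) }

/-- Probability `p_i = Tr[(I_A ⊗ Π) ρ_AC]` of measurement outcome `Pj` (a projector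
on `C`) in the state `ρAC`. -/
noncomputable def measProb {A C : Type*} [Fintype A] [DecidableEq A] [Fintype C] [DecidableEq C]
    (ρAC : Matrix (A × C) (A × C) ℂ) (Pj : Matrix C C ℂ) : ℝ :=
  ((((1 : Matrix A A ℂ) ⊗ₖ Pj) * ρAC).trace).re

/-- Post-measurement conditional state
`ρ_{A,i} = Tr_C[(I_A ⊗ Π) ρ_AC (I_A ⊗ Π)] / p_i` of `A` given outcome `Pj` on `C`. -/
noncomputable def measState {A C : Type*} [Fintype A] [DecidableEq A] [Fintype C] [DecidableEq C]
    (ρAC : Matrix (A × C) (A × C) ℂ) (Pj : Matrix C C ℂ) : Matrix A A ℂ :=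
  ((measProb ρAC Pj : ℂ))⁻¹ •
    ptraceB (((1 : Matrix A A ℂ) ⊗ₖ Pj) * ρAC * ((1 : Matrix A A ℂ) ⊗ₖ Pj))

/-!
Measuring `C` with a projective measurement `{Π_i}` splits `ρ_AB` into the subnormalized states
`T_i = Tr_C[(I ⊗ I ⊗ Π_i) |Ψ⟩⟨Ψ| (I ⊗ I ⊗ Π_i)]`, and `Tr_B T_i = p_i ρ_{A,i}` because `Π_i`
acts on a system other than `A`. The spectral decompositions of the `T_i` together form a
pure-state ensemble for `ρ_AB`, so by concavity of the entropy
`E_F(ρ_AB) ≤ ∑_i p_i S(ρ_{A,i})` for every measurement; the trivial measurement gives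
`E_F(ρ_AB) ≤ S(ρ_A)`, and taking the supremum gives the claim.

Concavity of `S` comes from comparing spectra with diagonals: in any orthonormal basis the
diagonal of a state is the image of its spectrum under the doubly stochastic matrix `|W_ij|²`
of a unitary `W`, and `η(x) = -x log x` is concave.
-/

open Matrix Finset

section LinearAlgebra

variable {n : Type*} [Fintype n] [DecidableEq n]

lemma sum_norm_sq_row_of_mem_unitaryGroup {U : Matrix n n ℂ} (hU : U ∈ unitaryGroup n ℂ)
    (i : n) : ∑ j, ‖U i j‖ ^ 2 = 1 := by
  have h := congr_fun₂ (mem_unitaryGroup_iff.mp hU) i i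
  simp only [mul_apply, star_apply, one_apply_eq, Complex.star_def, Complex.mul_conj,
    Complex.normSq_eq_norm_sq] at h
  exact_mod_cast h

lemma norm_sq_mem_doublyStochastic_of_mem_unitaryGroup {U : Matrix n n ℂ}
    (hU : U ∈ unitaryGroup n ℂ) :
    (of fun i j => ‖U i j‖ ^ 2) ∈ doublyStochastic ℝ n := by
  refine mem_doublyStochastic_iff_sum.mpr
    ⟨fun i j => sq_nonneg _, sum_norm_sq_row_of_mem_unitaryGroup hU, fun j => ?_⟩
  simpa [star_apply] using sum_norm_sq_row_of_mem_unitaryGroup (Unitary.star_mem hU) j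

lemma ConcaveOn.sum_le_sum_mulVec_of_mem_doublyStochastic {s : Set ℝ} {f : ℝ → ℝ}
    (hf : ConcaveOn ℝ s f) {M : Matrix n n ℝ} (hM : M ∈ doublyStochastic ℝ n) {x : n → ℝ}
    (hx : ∀ j, x j ∈ s) : ∑ j, f (x j) ≤ ∑ i, f ((M *ᵥ x) i) :=
  calc ∑ j, f (x j) = ∑ i, ∑ j, M i j • f (x j) := by
        simp [sum_comm (γ := n), ← sum_mul, sum_col_of_mem_doublyStochastic hM]
    _ ≤ ∑ i, f ((M *ᵥ x) i) := sum_le_sum fun i _ =>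
        hf.le_map_sum (fun j _ => nonneg_of_mem_doublyStochastic hM)
          (sum_row_of_mem_doublyStochastic hM i) (fun j _ => hx j)

lemma re_mul_diagonal_mul_star_apply_self (W : Matrix n n ℂ) (μ : n → ℝ) (i : n) :
    ((W * diagonal (fun j => (μ j : ℂ)) * star W) i i).re
      = ((of fun i j => ‖W i j‖ ^ 2) *ᵥ μ) i := by
  have h : (W * diagonal (fun j => (μ j : ℂ)) * star W) i i
      = ((∑ j, ‖W i j‖ ^ 2 * μ j : ℝ) : ℂ) := by
    rw [mul_apply]
    simp only [mul_diagonal, star_apply]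
    push_cast
    refine sum_congr rfl fun j _ => ?_
    rw [mul_right_comm, Complex.star_def, Complex.mul_conj, Complex.normSq_eq_norm_sq]
    push_cast
    ring
  rw [h, Complex.ofReal_re]
  rfl

namespace Matrix.IsHermitian

variable {T : Matrix n n ℂ}

lemma sum_eigenvalues_eq_one (hT : T.IsHermitian) (htr : T.trace = 1) :
    ∑ i, hT.eigenvalues i = 1 := by
  have h := hT.trace_eq_sum_eigenvalues.symm.trans htr
  exact RCLike.ofReal_injective (K := ℂ) (by simpa using h)

lemma eq_sum_eigenvalues_smul_vecMulVec (hT : T.IsHermitian) :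
    T = ∑ k, (hT.eigenvalues k : ℂ) •
      vecMulVec ⇑(hT.eigenvectorBasis k) (star ⇑(hT.eigenvectorBasis k)) := by
  conv_lhs => rw [hT.spectral_theorem, Unitary.conjStarAlgAut_apply]
  ext x y
  rw [mul_apply, Matrix.sum_apply]
  refine sum_congr rfl fun k _ => ?_
  simp only [mul_diagonal, smul_apply, vecMulVec_apply, star_apply, Pi.star_apply,
    eigenvectorUnitary_apply, Function.comp_apply, smul_eq_mul]
  rw [RCLike.ofReal_eq_complex_ofReal]
  ring

lemma sum_norm_sq_eigenvectorBasis (hT : T.IsHermitian) (k : n) :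
    ∑ v, ‖hT.eigenvectorBasis k v‖ ^ 2 = 1 := by
  rw [← EuclideanSpace.norm_sq_eq, hT.eigenvectorBasis.orthonormal.1 k, one_pow]

end Matrix.IsHermitian

end LinearAlgebra

section Entropy

variable {n : Type*} [Fintype n] [DecidableEq n]

lemma vN_eq_sum_negMulLog {ρ : Matrix n n ℂ} (hρ : ρ.IsHermitian) :
    vN ρ = ∑ i, Real.negMulLog (hρ.eigenvalues i) := by
  simp [vN, hρ, Real.negMulLog]

lemma vN_nonneg {ρ : Matrix n n ℂ} (hρ : ρ.PosSemidef) (htr : ρ.trace = 1) : 0 ≤ vN ρ := by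
  rw [vN_eq_sum_negMulLog hρ.1]
  refine sum_nonneg fun i _ => Real.negMulLog_nonneg (hρ.eigenvalues_nonneg i) ?_
  rw [← hρ.1.sum_eigenvalues_eq_one htr]
  exact single_le_sum (fun j _ => hρ.eigenvalues_nonneg j) (mem_univ i)

lemma vN_le_sum_negMulLog_diag {τ : Matrix n n ℂ} (hτ : τ.PosSemidef) {U : Matrix n n ℂ}
    (hU : U ∈ unitaryGroup n ℂ) : vN τ ≤ ∑ i, Real.negMulLog ((star U * τ * U) i i).re := by
  set V := hτ.1.eigenvectorUnitary
  have hconj : star U * τ * U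
      = (star U * V) * diagonal (fun j => (hτ.1.eigenvalues j : ℂ)) * star (star U * V) := by
    conv_lhs => rw [hτ.1.spectral_theorem, Unitary.conjStarAlgAut_apply]
    simp only [star_mul, star_star, mul_assoc]
    rfl
  rw [vN_eq_sum_negMulLog hτ.1, hconj]
  simp_rw [re_mul_diagonal_mul_star_apply_self]
  exact Real.concaveOn_negMulLog.sum_le_sum_mulVec_of_mem_doublyStochastic
    (norm_sq_mem_doublyStochastic_of_mem_unitaryGroup (mul_mem (Unitary.star_mem hU) V.2))
    hτ.eigenvalues_nonneg

lemma vN_eq_sum_negMulLog_diag {ρ : Matrix n n ℂ} (hρ : ρ.IsHermitian) :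
    vN ρ = ∑ i, Real.negMulLog
      ((star (hρ.eigenvectorUnitary : Matrix n n ℂ) * ρ * hρ.eigenvectorUnitary) i i).re := by
  have h := hρ.conjStarAlgAut_star_eigenvectorUnitary
  rw [Unitary.conjStarAlgAut_star_apply] at h
  simp [h, vN_eq_sum_negMulLog hρ]

theorem sum_mul_vN_le_vN_sum_smul {ι : Type*} [Fintype ι] {w : ι → ℝ} {τ : ι → Matrix n n ℂ}
    (hw : ∀ k, 0 ≤ w k) (hw1 : ∑ k, w k = 1) (hτ : ∀ k, (τ k).PosSemidef) :
    ∑ k, w k * vN (τ k) ≤ vN (∑ k, (w k : ℂ) • τ k) := by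
  set ρ := ∑ k, (w k : ℂ) • τ k
  have hρ : ρ.IsHermitian :=
    (posSemidef_sum _ fun k _ => (hτ k).smul (Complex.zero_le_real.mpr (hw k))).1
  set U := hρ.eigenvectorUnitary
  set d : ι → n → ℝ := fun k i => ((star (U : Matrix n n ℂ) * τ k * U) i i).re
  have hd : ∀ k i, 0 ≤ d k i := fun k i =>
    (Complex.nonneg_iff.mp ((hτ k).conjTranspose_mul_mul_same (U : Matrix n n ℂ)).diag_nonneg).1
  have hdiag : ∀ i, ((star (U : Matrix n n ℂ) * ρ * U) i i).re = ∑ k, w k • d k i := fun i => by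
    simp [ρ, d, mul_sum, sum_mul, Matrix.sum_apply, Complex.re_sum]
  calc ∑ k, w k * vN (τ k) ≤ ∑ k, w k * ∑ i, Real.negMulLog (d k i) :=
        sum_le_sum fun k _ =>
          mul_le_mul_of_nonneg_left (vN_le_sum_negMulLog_diag (hτ k) U.2) (hw k)
    _ = ∑ i, ∑ k, w k • Real.negMulLog (d k i) := by
        simp only [mul_sum, smul_eq_mul]
        exact sum_comm
    _ ≤ ∑ i, Real.negMulLog (∑ k, w k • d k i) := sum_le_sum fun i _ =>
        Real.concaveOn_negMulLog.le_map_sum (fun k _ => hw k) hw1 (fun k _ => hd k i)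
    _ = vN ρ := by
        rw [vN_eq_sum_negMulLog_diag hρ]
        exact sum_congr rfl fun i _ => congrArg _ (hdiag i).symm

end Entropy

section PartialTrace

variable {A B C : Type*}

lemma ptraceB_sum [Fintype B] {ι : Type*} (s : Finset ι) (ρ : ι → Matrix (A × B) (A × B) ℂ) :
    ptraceB (∑ i ∈ s, ρ i) = ∑ i ∈ s, ptraceB (ρ i) := by
  ext a a'
  simp only [ptraceB, Matrix.sum_apply, of_apply]
  exact sum_comm

lemma ptraceB_smul [Fintype B] (c : ℂ) (ρ : Matrix (A × B) (A × B) ℂ) :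
    ptraceB (c • ρ) = c • ptraceB ρ := by
  ext a a'
  simp [ptraceB, mul_sum]

lemma trace_ptraceB [Fintype A] [Fintype B] (ρ : Matrix (A × B) (A × B) ℂ) :
    (ptraceB ρ).trace = ρ.trace := by
  simp [trace, ptraceB, Fintype.sum_prod_type]

lemma trace_vecMulVec_star [Fintype A] (ψ : A → ℂ) :
    (vecMulVec ψ (star ψ)).trace = ((∑ v, ‖ψ v‖ ^ 2 : ℝ) : ℂ) := by
  simp [trace, vecMulVec_apply, Complex.mul_conj, Complex.normSq_eq_norm_sq]

lemma posSemidef_ptraceB_vecMulVec [Fintype A] [Fintype B] (ψ : A × B → ℂ) :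
    (ptraceB (vecMulVec ψ (star ψ))).PosSemidef := by
  have h : ptraceB (vecMulVec ψ (star ψ))
      = (of fun a b => ψ (a, b)) * (of fun a b => ψ (a, b))ᴴ := by
    ext a a'
    rfl
  rw [h]
  exact posSemidef_self_mul_conjTranspose _

lemma posSemidef_ptraceC3_vecMulVec [Fintype A] [Fintype B] [Fintype C] (ψ : A × B × C → ℂ) :
    (ptraceC3 (vecMulVec ψ (star ψ))).PosSemidef :=
  posSemidef_ptraceB_vecMulVec fun x : (A × B) × C => ψ (x.1.1, x.1.2, x.2)

lemma ptraceB_ptraceC3 [Fintype B] [Fintype C] (ρ : Matrix (A × B × C) (A × B × C) ℂ) :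
    ptraceB (ptraceC3 ρ) = ptraceB ρ := by
  ext a a'
  simp [ptraceB, ptraceC3, Fintype.sum_prod_type]

lemma ptraceB_ptraceB3 [Fintype B] [Fintype C] (ρ : Matrix (A × B × C) (A × B × C) ℂ) :
    ptraceB (ptraceB3 ρ) = ptraceB ρ := by
  ext a a'
  simp only [ptraceB, ptraceB3, of_apply, Fintype.sum_prod_type]
  exact sum_comm

lemma trace_ptraceC3_vecMulVec [Fintype A] [Fintype B] [Fintype C] {Ψ : A × B × C → ℂ}
    (hΨ : ∑ v, ‖Ψ v‖ ^ 2 = 1) :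
    (ptraceC3 (vecMulVec Ψ (star Ψ))).trace = 1 := by
  rw [← trace_ptraceB, ptraceB_ptraceC3, trace_ptraceB, trace_vecMulVec_star, hΨ,
    Complex.ofReal_one]

lemma ptraceC3_vecMulVec_apply [Fintype C] (Ψ : A × B × C → ℂ) (x y : A × B) :
    ptraceC3 (vecMulVec Ψ (star Ψ)) x y
      = star (fun c => Ψ (y.1, y.2, c)) ⬝ᵥ fun c => Ψ (x.1, x.2, c) := by
  simp [ptraceC3, dotProduct, vecMulVec_apply, mul_comm]

lemma ptraceB3_vecMulVec [Fintype B] (Ψ : A × B × C → ℂ) :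
    ptraceB3 (vecMulVec Ψ (star Ψ))
      = ∑ b, vecMulVec (fun x : A × C => Ψ (x.1, b, x.2)) (star fun x => Ψ (x.1, b, x.2)) := by
  ext x y
  simp [ptraceB3, Matrix.sum_apply, vecMulVec_apply]

end PartialTrace

section Ensemble

variable {A B : Type*} [Fintype A] [DecidableEq A] [Fintype B] [DecidableEq B]

lemma EoF_le_of_ensemble {ι : Type*} [Fintype ι] {ρ : Matrix (A × B) (A × B) ℂ}
    {p : ι → ℝ} {ψ : ι → A × B → ℂ} (hp : ∀ i, 0 ≤ p i) (hp1 : ∑ i, p i = 1)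
    (hψ : ∀ i, ∑ v, ‖ψ i v‖ ^ 2 = 1)
    (hρ : ρ = ∑ i, (p i : ℂ) • vecMulVec (ψ i) (star (ψ i))) :
    EoF ρ ≤ ∑ i, p i * vN (ptraceB (vecMulVec (ψ i) (star (ψ i)))) := by
  let e := (Fintype.equivFin ι).symm
  refine csInf_le ⟨0, ?_⟩ ⟨Fintype.card ι, p ∘ e, ψ ∘ e, fun i => hp (e i),
    (e.sum_comp p).trans hp1, fun i => hψ (e i), ?_, ?_⟩
  · rintro x ⟨n, p, ψ, hp, -, hψ, -, rfl⟩
    refine sum_nonneg fun i _ =>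
      mul_nonneg (hp i) (vN_nonneg (posSemidef_ptraceB_vecMulVec _) ?_)
    rw [trace_ptraceB, trace_vecMulVec_star, hψ i, Complex.ofReal_one]
  · rw [hρ]
    exact (e.sum_comp fun i => (p i : ℂ) • vecMulVec (ψ i) (star (ψ i))).symm
  · exact (e.sum_comp fun i => p i * vN (ptraceB (vecMulVec (ψ i) (star (ψ i))))).symm

/-- For `T = 0` the factor `(T.trace.re : ℂ)⁻¹` is the junk value `0`; both sides vanish. -/
lemma sum_eigenvalues_mul_vN_ptraceB_le {T : Matrix (A × B) (A × B) ℂ} (hT : T.PosSemidef) :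
    ∑ k, hT.1.eigenvalues k * vN (ptraceB
        (vecMulVec ⇑(hT.1.eigenvectorBasis k) (star ⇑(hT.1.eigenvectorBasis k))))
      ≤ T.trace.re * vN ((T.trace.re : ℂ)⁻¹ • ptraceB T) := by
  set μ := hT.1.eigenvalues
  set τ := fun k => ptraceB
    (vecMulVec ⇑(hT.1.eigenvectorBasis k) (star ⇑(hT.1.eigenvectorBasis k)))
  have hμ : ∀ k, 0 ≤ μ k := hT.eigenvalues_nonneg
  have htr : T.trace.re = ∑ k, μ k := by simp [μ, hT.1.trace_eq_sum_eigenvalues]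
  rw [htr]
  rcases (sum_nonneg fun k _ => hμ k : 0 ≤ ∑ k, μ k).eq_or_lt with h0 | hpos
  · have hμ0 : ∀ k, μ k = 0 := fun k =>
      (sum_eq_zero_iff_of_nonneg fun k _ => hμ k).mp h0.symm k (mem_univ k)
    simp [hμ0]
  set t := ∑ k, μ k
  have hsmul : (t : ℂ)⁻¹ • ptraceB T = ∑ k, ((μ k / t : ℝ) : ℂ) • τ k := by
    conv_lhs => rw [hT.1.eq_sum_eigenvalues_smul_vecMulVec]
    simp only [ptraceB_sum, ptraceB_smul, smul_sum, smul_smul]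
    refine sum_congr rfl fun k _ => ?_
    push_cast
    rw [div_eq_inv_mul]
  calc ∑ k, μ k * vN (τ k) = t * ∑ k, μ k / t * vN (τ k) := by
        rw [mul_sum]
        exact sum_congr rfl fun k _ => by field_simp
    _ ≤ t * vN ((t : ℂ)⁻¹ • ptraceB T) := by
        rw [hsmul]
        refine mul_le_mul_of_nonneg_left ?_ hpos.le
        exact sum_mul_vN_le_vN_sum_smul (fun k => div_nonneg (hμ k) hpos.le)
          (by rw [← sum_div, div_self hpos.ne']) fun k => posSemidef_ptraceB_vecMulVec _

theorem EoF_le_sum_of_sum_eq {ι : Type*} [Fintype ι] {ρ : Matrix (A × B) (A × B) ℂ}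
    (htr : ρ.trace = 1) {T : ι → Matrix (A × B) (A × B) ℂ} (hT : ∀ i, (T i).PosSemidef)
    (hsum : ∑ i, T i = ρ) :
    EoF ρ ≤ ∑ i, (T i).trace.re * vN (((T i).trace.re : ℂ)⁻¹ • ptraceB (T i)) := by
  set μ := fun i => (hT i).1.eigenvalues
  set φ := fun i k => ⇑((hT i).1.eigenvectorBasis k)
  have hμ1 : ∑ q : ι × (A × B), μ q.1 q.2 = 1 := by
    have h : ∀ i, ∑ k, μ i k = (T i).trace.re := fun i => by
      simp [μ, (hT i).1.trace_eq_sum_eigenvalues]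
    rw [Fintype.sum_prod_type]
    simp_rw [h]
    rw [← Complex.re_sum, ← trace_sum, hsum, htr, Complex.one_re]
  have hρ : ρ = ∑ q : ι × (A × B),
      (μ q.1 q.2 : ℂ) • vecMulVec (φ q.1 q.2) (star (φ q.1 q.2)) := by
    rw [Fintype.sum_prod_type, ← hsum]
    exact sum_congr rfl fun i _ => (hT i).1.eq_sum_eigenvalues_smul_vecMulVec
  calc EoF ρ ≤ ∑ q : ι × (A × B),
        μ q.1 q.2 * vN (ptraceB (vecMulVec (φ q.1 q.2) (star (φ q.1 q.2)))) :=
        EoF_le_of_ensemble (fun q => (hT q.1).eigenvalues_nonneg q.2) hμ1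
          (fun q => (hT q.1).1.sum_norm_sq_eigenvectorBasis q.2) hρ
    _ ≤ _ := by
        rw [Fintype.sum_prod_type]
        exact sum_le_sum fun i _ => sum_eigenvalues_mul_vN_ptraceB_le (hT i)

theorem EoF_le_vN_ptraceB {ρ : Matrix (A × B) (A × B) ℂ} (hρ : ρ.PosSemidef)
    (htr : ρ.trace = 1) : EoF ρ ≤ vN (ptraceB ρ) := by
  simpa [htr] using EoF_le_sum_of_sum_eq htr (T := fun _ : Unit => ρ) (fun _ => hρ) (by simp)

end Ensemble

section Measurement

variable {A B C : Type*}

/-- The vector `(I_A ⊗ I_B ⊗ P) Ψ`. -/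
def mulVecC [Fintype C] (P : Matrix C C ℂ) (Ψ : A × B × C → ℂ) : A × B × C → ℂ :=
  fun v => (P *ᵥ fun c => Ψ (v.1, v.2.1, c)) v.2.2

lemma star_mulVec_dotProduct_mulVec [Fintype C] {P : Matrix C C ℂ} (hP : P.IsHermitian)
    (hP2 : P * P = P) (u v : C → ℂ) : star (P *ᵥ v) ⬝ᵥ (P *ᵥ u) = star v ⬝ᵥ (P *ᵥ u) := by
  rw [star_mulVec, ← dotProduct_mulVec, mulVec_mulVec, hP.eq, hP2]

theorem sum_ptraceC3_mulVecC [Fintype C] [DecidableEq C] {ι : Type*} [Fintype ι]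
    (Ψ : A × B × C → ℂ) {P : ι → Matrix C C ℂ} (hP : ∀ i, (P i).IsHermitian)
    (hP2 : ∀ i, P i * P i = P i) (hsum : ∑ i, P i = 1) :
    ∑ i, ptraceC3 (vecMulVec (mulVecC (P i) Ψ) (star (mulVecC (P i) Ψ)))
      = ptraceC3 (vecMulVec Ψ (star Ψ)) := by
  ext x y
  simp only [Matrix.sum_apply, ptraceC3_vecMulVec_apply]
  simp only [mulVecC, star_mulVec_dotProduct_mulVec (hP _) (hP2 _), ← dotProduct_sum,
    ← sum_mulVec, hsum, one_mulVec]

lemma one_kronecker_mulVec_apply [Fintype A] [DecidableEq A] [Fintype C] (P : Matrix C C ℂ)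
    (u : A × C → ℂ) (a : A) (c : C) :
    (((1 : Matrix A A ℂ) ⊗ₖ P) *ᵥ u) (a, c) = (P *ᵥ fun c' => u (a, c')) c := by
  simp [mulVec, dotProduct, Fintype.sum_prod_type, one_apply, ite_mul]

variable [Fintype A] [DecidableEq A] [Fintype B] [Fintype C]

lemma ptraceB3_mulVecC (P : Matrix C C ℂ) (Ψ : A × B × C → ℂ) :
    ptraceB3 (vecMulVec (mulVecC P Ψ) (star (mulVecC P Ψ)))
      = ((1 : Matrix A A ℂ) ⊗ₖ P) * ptraceB3 (vecMulVec Ψ (star Ψ))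
        * ((1 : Matrix A A ℂ) ⊗ₖ P)ᴴ := by
  simp only [ptraceB3_vecMulVec, mul_sum, sum_mul, mul_vecMulVec, vecMulVec_mul,
    ← star_mulVec]
  congr! with b x
  all_goals exact
    (one_kronecker_mulVec_apply (A := A) P (fun x : A × C => Ψ (x.1, b, x.2)) _ _).symm

lemma ptraceB_conj_one_kronecker {P : Matrix C C ℂ} (hP : P.IsHermitian)
    (Ψ : A × B × C → ℂ) :
    ptraceB (((1 : Matrix A A ℂ) ⊗ₖ P) * ptraceB3 (vecMulVec Ψ (star Ψ))
        * ((1 : Matrix A A ℂ) ⊗ₖ P))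
      = ptraceB (ptraceC3 (vecMulVec (mulVecC P Ψ) (star (mulVecC P Ψ)))) := by
  rw [ptraceB_ptraceC3, ← ptraceB_ptraceB3, ptraceB3_mulVecC, conjTranspose_kronecker,
    conjTranspose_one, hP.eq]

variable [DecidableEq C]

lemma measState_ptraceB3_vecMulVec {P : Matrix C C ℂ} (hP : P.IsHermitian)
    (Ψ : A × B × C → ℂ) :
    measState (ptraceB3 (vecMulVec Ψ (star Ψ))) P
      = (measProb (ptraceB3 (vecMulVec Ψ (star Ψ))) P : ℂ)⁻¹ •
        ptraceB (ptraceC3 (vecMulVec (mulVecC P Ψ) (star (mulVecC P Ψ)))) := by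
  rw [measState, ptraceB_conj_one_kronecker hP]

lemma measProb_ptraceB3_vecMulVec {P : Matrix C C ℂ} (hP : P.IsHermitian) (hP2 : P * P = P)
    (Ψ : A × B × C → ℂ) :
    measProb (ptraceB3 (vecMulVec Ψ (star Ψ))) P
      = (ptraceC3 (vecMulVec (mulVecC P Ψ) (star (mulVecC P Ψ)))).trace.re := by
  have hX : ((1 : Matrix A A ℂ) ⊗ₖ P) * ((1 : Matrix A A ℂ) ⊗ₖ P)
      = (1 : Matrix A A ℂ) ⊗ₖ P := by
    rw [← mul_kronecker_mul, one_mul, hP2]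
  rw [measProb, ← trace_ptraceB (ptraceC3 _), ← ptraceB_conj_one_kronecker hP, trace_ptraceB]
  conv_rhs => rw [trace_mul_comm, ← mul_assoc, hX]

theorem EoF_le_sum_measProb_mul_vN_measState [DecidableEq B] {ι : Type*} [Fintype ι]
    {Ψ : A × B × C → ℂ} (hΨ : ∑ v, ‖Ψ v‖ ^ 2 = 1) {P : ι → Matrix C C ℂ}
    (hP : ∀ i, (P i).IsHermitian) (hP2 : ∀ i, P i * P i = P i) (hsum : ∑ i, P i = 1) :
    EoF (ptraceC3 (vecMulVec Ψ (star Ψ))) ≤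
      ∑ i, measProb (ptraceB3 (vecMulVec Ψ (star Ψ))) (P i)
        * vN (measState (ptraceB3 (vecMulVec Ψ (star Ψ))) (P i)) := by
  simp only [measState_ptraceB3_vecMulVec (hP _), measProb_ptraceB3_vecMulVec (hP _) (hP2 _)]
  exact EoF_le_sum_of_sum_eq (trace_ptraceC3_vecMulVec hΨ)
    (fun i => posSemidef_ptraceC3_vecMulVec _) (sum_ptraceC3_mulVecC Ψ hP hP2 hsum)

end Measurement

/-- Koashi–Winter relation: for a tripartite pure state
`ρ_ABC = |Ψ⟩⟨Ψ|`, `E_F(ρ_AB) ≤ S(ρ_A) − J(A:C)`, where `J(A:C)` is the classical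
correlation of `ρ_AC`, i.e. the supremum over projective measurements `{Π_i}` on `C`
of `S(ρ_A) − ∑ᵢ pᵢ S(ρ_{A,i})`. -/
theorem koashi_winter
    (dA dB dC : ℕ)
    (Ψ : Fin dA × Fin dB × Fin dC → ℂ) (hΨ : ∑ v, ‖Ψ v‖ ^ 2 = 1)
    (ρABC : Matrix (Fin dA × Fin dB × Fin dC) (Fin dA × Fin dB × Fin dC) ℂ)
    (hρ : ρABC = Matrix.vecMulVec Ψ (star Ψ))
    (J : ℝ)
    (hJ : J = sSup { x : ℝ | ∃ (m : ℕ) (Pj : Fin m → Matrix (Fin dC) (Fin dC) ℂ),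
        (∀ i, (Pj i).IsHermitian) ∧ (∀ i, Pj i * Pj i = Pj i) ∧ (∑ i, Pj i = 1) ∧
        x = vN (ptraceB ρABC)
          - ∑ i, measProb (ptraceB3 ρABC) (Pj i) * vN (measState (ptraceB3 ρABC) (Pj i)) }) :
    EoF (ptraceC3 ρABC) ≤ vN (ptraceB ρABC) - J := by
  subst hρ
  have hEoF : EoF (ptraceC3 (vecMulVec Ψ (star Ψ))) ≤ vN (ptraceB (vecMulVec Ψ (star Ψ))) := by
    simpa only [ptraceB_ptraceC3] using
      EoF_le_vN_ptraceB (posSemidef_ptraceC3_vecMulVec Ψ) (trace_ptraceC3_vecMulVec hΨ)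
  rw [hJ, le_sub_comm]
  -- `Real.sSup_le` also covers the junk value `sSup = 0` (unbounded set), via `hEoF`.
  refine Real.sSup_le ?_ (sub_nonneg.mpr hEoF)
  rintro x ⟨m, P, hP, hP2, hsum, rfl⟩
  linarith [EoF_le_sum_measProb_mul_vN_measState hΨ hP hP2 hsum]
end
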